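/- arXiv:1503.05003 — 8 statements merged into one kernel-verified Lean document; each statement's English description precedes it below -/
import Mathlib

section
/- Let A, B, C be infinite complex matrices such that A and B are lower Hessenberg type. Then all products AB, (AB)C, BC, A(BC) are admissible and the associativity (AB)C = A(BC) holds. -/
def LowerHess (A : ℕ → ℕ → ℂ) : Prop :=
  ∃ N : ℤ, ∀ i j : ℕ, (j : ℤ) - (i : ℤ) > N → A i j = 0

def UpperHess (A : ℕ → ℕ → ℂ) : Prop :=
  ∃ N : ℤ, ∀ i j : ℕ, (i : ℤ) - (j : ℤ) > N → A i j = 0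

def Adm (A B : ℕ → ℕ → ℂ) : Prop :=
  ∀ i k : ℕ, (Function.support fun j => A i j * B j k).Finite

noncomputable def matMul (A B : ℕ → ℕ → ℂ) : ℕ → ℕ → ℂ :=
  fun i k => ∑ᶠ j, A i j * B j k

def idM : ℕ → ℕ → ℂ := fun i j => if i = j then 1 else 0

def adjM (A : ℕ → ℕ → ℂ) : ℕ → ℕ → ℂ := fun i j => (starRingEnd ℂ) (A j i)

def IsLowerH (A : ℕ → ℕ → ℂ) : Prop :=
  LowerHess A ∧ ∃ B, LowerHess B ∧ matMul A B = idM ∧ matMul B A = idM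

lemma gt_of_not_mem_range {j : ℕ} {m : ℤ} (h : j ∉ Finset.range (m.toNat + 1)) :
    (j : ℤ) > m := by
  simp only [Finset.mem_range, not_lt] at h
  have : m ≤ (m.toNat : ℤ) := Int.self_le_toNat m
  have h2 : (m.toNat : ℤ) < j := by exact_mod_cast h
  omega

lemma supp_sub {f : ℕ → ℂ} {m : ℤ} (h : ∀ j : ℕ, (j : ℤ) > m → f j = 0) :
    Function.support f ⊆ ↑(Finset.range (m.toNat + 1)) := by
  intro j hj
  by_contra hc
  exact hj (h j (gt_of_not_mem_range hc))

/-- Associativity when A and B are lower Hessenberg type. -/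
theorem stmt1 (A B C : ℕ → ℕ → ℂ) (hA : LowerHess A) (hB : LowerHess B) :
    Adm A B ∧ Adm (matMul A B) C ∧ Adm B C ∧ Adm A (matMul B C) ∧
      matMul (matMul A B) C = matMul A (matMul B C) := by
  obtain ⟨NA, hNA⟩ := hA
  obtain ⟨NB, hNB⟩ := hB
  -- A i j = 0 for j > i + NA ; B j k = 0 for k > j + NB
  have hAB0 : ∀ i k : ℕ, (k : ℤ) > (i : ℤ) + NA + NB → matMul A B i k = 0 := by
    intro i k hk
    have : (fun j : ℕ => A i j * B j k) = fun _ => (0 : ℂ) := by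
      funext j
      by_cases hj : (j : ℤ) - (i : ℤ) > NA
      · rw [hNA i j hj, zero_mul]
      · rw [hNB j k (by omega), mul_zero]
    simp [matMul, this]
  have admAB : Adm A B := by
    intro i k
    exact Set.Finite.subset (Finset.range (((i : ℤ) + NA).toNat + 1)).finite_toSet
      (supp_sub fun j hj => by rw [hNA i j (by omega), zero_mul])
  have admBC : Adm B C := by
    intro i k
    exact Set.Finite.subset (Finset.range (((i : ℤ) + NB).toNat + 1)).finite_toSet
      (supp_sub fun j hj => by rw [hNB i j (by omega), zero_mul])
  have admABC : Adm (matMul A B) C := by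
    intro i l
    exact Set.Finite.subset (Finset.range (((i : ℤ) + NA + NB).toNat + 1)).finite_toSet
      (supp_sub fun k hk => by rw [hAB0 i k (by omega), zero_mul])
  have admA_BC : Adm A (matMul B C) := by
    intro i l
    exact Set.Finite.subset (Finset.range (((i : ℤ) + NA).toNat + 1)).finite_toSet
      (supp_sub fun j hj => by rw [hNA i j (by omega), zero_mul])
  refine ⟨admAB, admABC, admBC, admA_BC, ?_⟩
  funext i l
  set S : Finset ℕ := Finset.range (((i : ℤ) + NA).toNat + 1) with hS
  set T : Finset ℕ := Finset.range (((i : ℤ) + NA + NB).toNat + 1) with hT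
  have hL : matMul (matMul A B) C i l = ∑ k ∈ T, (∑ j ∈ S, A i j * B j k) * C k l := by
    show (∑ᶠ k, matMul A B i k * C k l) = _
    rw [finsum_eq_finset_sum_of_support_subset _
      (supp_sub (m := (i : ℤ) + NA + NB) fun k hk => by rw [hAB0 i k (by omega), zero_mul])]
    refine Finset.sum_congr rfl fun k _ => ?_
    congr 1
    exact finsum_eq_finset_sum_of_support_subset _
      (supp_sub fun j hj => by rw [hNA i j (by omega), zero_mul])
  have hR : matMul A (matMul B C) i l = ∑ j ∈ S, A i j * ∑ k ∈ T, B j k * C k l := by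
    show (∑ᶠ j, A i j * matMul B C j l) = _
    rw [finsum_eq_finset_sum_of_support_subset _
      (supp_sub (m := (i : ℤ) + NA) fun j hj => by rw [hNA i j (by omega), zero_mul])]
    refine Finset.sum_congr rfl fun j _ => ?_
    by_cases hz : A i j = 0
    · simp [hz]
    have hjle : (j : ℤ) ≤ (i : ℤ) + NA := by
      by_contra hc
      exact hz (hNA i j (by omega))
    congr 1
    exact finsum_eq_finset_sum_of_support_subset _
      (supp_sub fun k hk => by rw [hNB j k (by omega), zero_mul])
  rw [hL, hR]
  simp_rw [Finset.sum_mul, Finset.mul_sum, mul_assoc]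
  exact Finset.sum_comm
end

section
/- If A is an infinite lower H-matrix (lower Hessenberg type with a lower Hessenberg type two-sided inverse), then: (1) the right kernel of A is trivial, i.e., AX = 0 for a column vector X implies X = 0; (2) the only finitely supported row vector X with XA = 0 is X = 0. -/
lemma hessNat {A : ℕ → ℕ → ℂ} (h : LowerHess A) :
    ∃ n : ℕ, ∀ i j : ℕ, j > i + n → A i j = 0 := by
  obtain ⟨N, hN⟩ := h
  refine ⟨N.toNat, fun i j hj => hN i j ?_⟩
  have : (N : ℤ) ≤ (N.toNat : ℤ) := Int.self_le_toNat N
  omega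

/-- A lower H-matrix has trivial right kernel, and no nonzero finitely supported
row vector in its left kernel. -/
theorem stmt5 (A B : ℕ → ℕ → ℂ) (hA : LowerHess A) (hB : LowerHess B)
    (h1 : matMul A B = idM) (h2 : matMul B A = idM) :
    (∀ X : ℕ → ℂ, (∀ i, ∑ᶠ j, A i j * X j = 0) → X = 0) ∧
    (∀ X : ℕ → ℂ, (Function.support X).Finite → (∀ j, ∑ᶠ i, X i * A i j = 0) → X = 0) := by
  obtain ⟨m, hm⟩ := hessNat hA
  obtain ⟨n, hn⟩ := hessNat hB
  constructor
  · intro X hX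
    funext i
    show X i = 0
    have key : X i = ∑ᶠ k, matMul B A i k * X k := by
      rw [h2, finsum_eq_single _ i]
      · simp [idM]
      · intro k hk; simp [idM, Ne.symm hk]
    rw [key]
    set S := Finset.range (i + n + 1) with hS
    set T := Finset.range (i + n + m + 1) with hT
    have hrow : ∀ k, matMul B A i k = ∑ j ∈ S, B i j * A j k := by
      intro k
      refine finsum_eq_finset_sum_of_support_subset _ ?_
      intro j hj
      simp only [Function.mem_support] at hj
      simp only [hS, Finset.coe_range, Set.mem_Iio]
      by_contra hc
      exact hj (by rw [hn i j (by omega)]; ring)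
    have houter : (∑ᶠ k, matMul B A i k * X k) = ∑ k ∈ T, matMul B A i k * X k := by
      refine finsum_eq_finset_sum_of_support_subset _ ?_
      intro k hk
      simp only [Function.mem_support] at hk
      simp only [hT, Finset.coe_range, Set.mem_Iio]
      by_contra hc
      apply hk
      rw [hrow]
      have : ∀ j ∈ S, B i j * A j k = 0 := by
        intro j hj
        simp only [hS, Finset.mem_range] at hj
        rw [hm j k (by omega)]; ring
      rw [Finset.sum_eq_zero this]; ring
    rw [houter]
    calc ∑ k ∈ T, matMul B A i k * X k
        = ∑ k ∈ T, ∑ j ∈ S, B i j * A j k * X k := by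
          refine Finset.sum_congr rfl fun k _ => ?_
          rw [hrow, Finset.sum_mul]
      _ = ∑ j ∈ S, B i j * ∑ k ∈ T, A j k * X k := by
          rw [Finset.sum_comm]
          refine Finset.sum_congr rfl fun j _ => ?_
          rw [Finset.mul_sum]; exact Finset.sum_congr rfl fun k _ => by ring
      _ = 0 := by
          refine Finset.sum_eq_zero fun j hj => ?_
          simp only [hS, Finset.mem_range] at hj
          have : (∑ k ∈ T, A j k * X k) = ∑ᶠ k, A j k * X k := by
            symm
            refine finsum_eq_finset_sum_of_support_subset _ ?_
            intro k hk
            simp only [Function.mem_support] at hk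
            simp only [hT, Finset.coe_range, Set.mem_Iio]
            by_contra hc
            exact hk (by rw [hm j k (by omega)]; ring)
          rw [this, hX j, mul_zero]
  · intro X hfin hX
    funext k
    show X k = 0
    have key : X k = ∑ᶠ i, X i * matMul A B i k := by
      rw [h1, finsum_eq_single _ k]
      · simp [idM]
      · intro i hi; simp [idM, hi]
    rw [key]
    set S := hfin.toFinset with hS
    obtain ⟨b, hb⟩ : ∃ b : ℕ, ∀ i ∈ S, i ≤ b :=
      ⟨S.sup id, fun i hi => Finset.le_sup (f := id) hi⟩
    set T := Finset.range (b + m + 1) with hT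
    have hsum : (∑ᶠ i, X i * matMul A B i k) = ∑ i ∈ S, X i * matMul A B i k := by
      refine finsum_eq_finset_sum_of_support_subset _ ?_
      intro i hi
      simp only [Function.mem_support] at hi
      have : X i ≠ 0 := fun h => hi (by rw [h]; ring)
      simpa [hS] using this
    rw [hsum]
    have hrow : ∀ i ∈ S, matMul A B i k = ∑ j ∈ T, A i j * B j k := by
      intro i hi
      refine finsum_eq_finset_sum_of_support_subset _ ?_
      intro j hj
      simp only [Function.mem_support] at hj
      simp only [hT, Finset.coe_range, Set.mem_Iio]
      by_contra hc
      have := hb i hi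
      exact hj (by rw [hm i j (by omega)]; ring)
    calc ∑ i ∈ S, X i * matMul A B i k
        = ∑ i ∈ S, ∑ j ∈ T, X i * A i j * B j k := by
          refine Finset.sum_congr rfl fun i hi => ?_
          rw [hrow i hi, Finset.mul_sum]
          exact Finset.sum_congr rfl fun j _ => by ring
      _ = ∑ j ∈ T, (∑ i ∈ S, X i * A i j) * B j k := by
          rw [Finset.sum_comm]
          exact Finset.sum_congr rfl fun j _ => by rw [Finset.sum_mul]
      _ = 0 := by
          refine Finset.sum_eq_zero fun j _ => ?_
          have : (∑ i ∈ S, X i * A i j) = ∑ᶠ i, X i * A i j := by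
            symm
            refine finsum_eq_finset_sum_of_support_subset _ ?_
            intro i hi
            simp only [Function.mem_support] at hi
            have : X i ≠ 0 := fun h => hi (by rw [h]; ring)
            simpa [hS] using this
          rw [this, hX j, zero_mul]
end

section
/- The set of infinite lower H-matrices forms a group under matrix multiplication: it contains the identity, is closed under products, and is closed under taking (the unique) inverses, with multiplication associative on this set. -/
lemma rowBound {A : ℕ → ℕ → ℂ} (hA : LowerHess A) :
    ∃ n : ℕ → ℕ, ∀ i j, n i ≤ j → A i j = 0 := by
  obtain ⟨N, hN⟩ := hA
  refine ⟨fun i => ((i : ℤ) + N + 1).toNat, fun i j h => hN i j ?_⟩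
  have := (Int.toNat_le (m := (i : ℤ) + N + 1) (n := j)).1 h
  omega

lemma matMul_eq_sum {A B : ℕ → ℕ → ℂ} {i k n : ℕ} (h : ∀ j, n ≤ j → A i j = 0) :
    matMul A B i k = ∑ j ∈ Finset.range n, A i j * B j k := by
  apply finsum_eq_finset_sum_of_support_subset
  intro j hj
  simp only [Finset.coe_range, Set.mem_Iio]
  by_contra hn
  refine hj ?_
  show A i j * B j k = 0
  rw [h j (not_lt.1 hn)]; ring

lemma matMul_id (A : ℕ → ℕ → ℂ) : matMul A idM = A := by
  funext i k
  have : matMul A idM i k = A i k * idM k k :=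
    finsum_eq_single _ k (fun x hx => by simp [idM, hx])
  simpa [idM] using this

lemma id_matMul (A : ℕ → ℕ → ℂ) : matMul idM A = A := by
  funext i k
  have : matMul idM A i k = idM i i * A i k :=
    finsum_eq_single _ i (fun x hx => by simp [idM, hx.symm])
  simpa [idM] using this

lemma lowerHess_idM : LowerHess idM := by
  refine ⟨0, fun i j h => ?_⟩
  have : i ≠ j := by omega
  simp [idM, this]

lemma lowerHess_matMul {A B : ℕ → ℕ → ℂ} (hA : LowerHess A) (hB : LowerHess B) :
    LowerHess (matMul A B) := by
  obtain ⟨N₁, h₁⟩ := hA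
  obtain ⟨N₂, h₂⟩ := hB
  refine ⟨N₁ + N₂, fun i j h => ?_⟩
  apply finsum_eq_zero_of_forall_eq_zero
  intro l
  by_cases hl : (l : ℤ) - (i : ℤ) > N₁
  · rw [h₁ i l hl]; ring
  · rw [h₂ l j (by omega)]; ring

lemma matMul_assoc {A B : ℕ → ℕ → ℂ} (hA : LowerHess A) (hB : LowerHess B) (C : ℕ → ℕ → ℂ) :
    matMul (matMul A B) C = matMul A (matMul B C) := by
  obtain ⟨nA, hnA⟩ := rowBound hA
  obtain ⟨nB, hnB⟩ := rowBound hB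
  funext i k
  set n₁ := nA i with hn₁
  set n₂ := (Finset.range n₁).sup nB with hn₂
  have hB' : ∀ l < n₁, ∀ j, n₂ ≤ j → B l j = 0 := fun l hl j hj =>
    hnB l j (le_trans (Finset.le_sup (Finset.mem_range.2 hl)) hj)
  have hAB : ∀ j, n₂ ≤ j → matMul A B i j = 0 := by
    intro j hj
    apply finsum_eq_zero_of_forall_eq_zero
    intro l
    by_cases hl : l < n₁
    · rw [hB' l hl j hj]; ring
    · rw [hnA i l (not_lt.1 hl)]; ring
  rw [matMul_eq_sum hAB, matMul_eq_sum (hnA i)]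
  have inner : ∀ l ∈ Finset.range n₁,
      A i l * matMul B C l k = A i l * ∑ j ∈ Finset.range n₂, B l j * C j k := by
    intro l hl
    rw [matMul_eq_sum (fun j hj => hB' l (Finset.mem_range.1 hl) j hj)]
  rw [Finset.sum_congr rfl inner]
  have outer : ∀ j ∈ Finset.range n₂,
      matMul A B i j * C j k = (∑ l ∈ Finset.range n₁, A i l * B l j) * C j k := by
    intro j _
    rw [matMul_eq_sum (hnA i)]
  rw [Finset.sum_congr rfl outer]
  simp_rw [Finset.sum_mul, Finset.mul_sum, mul_assoc]
  exact Finset.sum_comm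

/-- The lower H-matrices form a group under matrix multiplication. -/
theorem stmt6 :
    IsLowerH idM ∧
    (∀ A B, IsLowerH A → IsLowerH B → IsLowerH (matMul A B)) ∧
    (∀ A B, LowerHess A → LowerHess B → matMul A B = idM → matMul B A = idM → IsLowerH B) ∧
    (∀ A B C, IsLowerH A → IsLowerH B → IsLowerH C →
      matMul (matMul A B) C = matMul A (matMul B C)) := by
  refine ⟨⟨lowerHess_idM, idM, lowerHess_idM, matMul_id idM, matMul_id idM⟩, ?_, ?_, ?_⟩
  · rintro A B ⟨hA, A', hA', hAA', hA'A⟩ ⟨hB, B', hB', hBB', hB'B⟩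
    refine ⟨lowerHess_matMul hA hB, matMul B' A', lowerHess_matMul hB' hA', ?_, ?_⟩
    · rw [matMul_assoc hA hB, ← matMul_assoc hB hB', hBB', id_matMul, hAA']
    · rw [matMul_assoc hB' hA', ← matMul_assoc hA' hA, hA'A, id_matMul, hB'B]
  · rintro A B hA hB hAB hBA
    exact ⟨hB, A, hA, hBA, hAB⟩
  · rintro A B C ⟨hA, -⟩ ⟨hB, -⟩ -
    exact matMul_assoc hA hB C
end

section
/- Let u be a Hermitian linear functional on the space Λ of complex Laurent polynomials with u = u_* and let ℓ ∈ Λ be Hermitian of degree one (ℓ(z) = αz + β + conj(α)z⁻¹, α ≠ 0, β ∈ ℝ), and let v be a Hermitian functional with v[1] ≠ 0. Then a solution w of wℓ = v (meaning w[ℓf] = v[f] for all f ∈ Λ) is Hermitian on all of Λ if and only if w[f_*] = conj(w[f]) for all f in a basis of 𝕃_1 = span{1, z, z⁻¹}. -/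
noncomputable section

/-- The space Λ of complex Laurent polynomials. -/
abbrev Lau : Type := AddMonoidAlgebra ℂ ℤ

/-- The substar operation f_*(z) = conj (f (1/conj z)): coefficientwise
(f_*)_j = conj (f_{-j}). -/
def substar (f : Lau) : Lau :=
  AddMonoidAlgebra.ofCoeff (Finsupp.equivMapDomain (Equiv.neg ℤ)
    (Finsupp.mapRange (fun z => (starRingEnd ℂ) z) (by simp) (show ℤ →₀ ℂ from f.coeff)))

lemma substar_apply (f : Lau) (j : ℤ) : (substar f).coeff j = (starRingEnd ℂ) (f.coeff (-j)) := by
  simp [substar, Finsupp.equivMapDomain_apply]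
lemma substar_single (n : ℤ) (c : ℂ) :
    substar (AddMonoidAlgebra.single n c : Lau) = AddMonoidAlgebra.single (-n) ((starRingEnd ℂ) c) := by
  ext j
  rcases eq_or_ne j (-n) with h | h
  · subst h
    rw [substar_apply, neg_neg, AddMonoidAlgebra.coeff_single, AddMonoidAlgebra.coeff_single,
      Finsupp.single_eq_same, Finsupp.single_eq_same]
  · rw [substar_apply, AddMonoidAlgebra.coeff_single, AddMonoidAlgebra.coeff_single,
      Finsupp.single_eq_of_ne' (Ne.symm h),
      Finsupp.single_eq_of_ne' (by omega : n ≠ -j), map_zero]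
lemma substar_zero : substar (0 : Lau) = 0 := by
  ext j; rw [substar_apply]; simp
lemma substar_add (f g : Lau) : substar (f + g) = substar f + substar g := by
  ext j
  rw [substar_apply]
  rw [AddMonoidAlgebra.coeff_add, AddMonoidAlgebra.coeff_add, Finsupp.add_apply, Finsupp.add_apply]
  rw [map_add, substar_apply, substar_apply]
lemma substar_smul (c : ℂ) (f : Lau) :
    substar (c • f) = (starRingEnd ℂ) c • substar f := by
  ext j
  rw [substar_apply]
  rw [AddMonoidAlgebra.coeff_smul_apply, AddMonoidAlgebra.coeff_smul_apply]
  rw [smul_eq_mul, smul_eq_mul, map_mul, substar_apply]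

lemma ell_mul_single (α : ℂ) (β : ℝ) (ℓ : Lau)
    (hℓ : ℓ = (AddMonoidAlgebra.single (1 : ℤ) α : Lau) + (AddMonoidAlgebra.single (0 : ℤ) (β : ℂ) : Lau) +
      (AddMonoidAlgebra.single (-1 : ℤ) ((starRingEnd ℂ) α) : Lau)) (m : ℤ) :
    ℓ * (AddMonoidAlgebra.single m 1 : Lau) =
      (AddMonoidAlgebra.single (m + 1) α : Lau) + AddMonoidAlgebra.single m (β : ℂ)
        + AddMonoidAlgebra.single (m - 1) ((starRingEnd ℂ) α) := by
  rw [hℓ, add_mul, add_mul, AddMonoidAlgebra.single_mul_single,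
    AddMonoidAlgebra.single_mul_single, AddMonoidAlgebra.single_mul_single]
  simp [add_comm, sub_eq_add_neg]

lemma substar_ell_mul (α : ℂ) (β : ℝ) (ℓ : Lau)
    (hℓ : ℓ = (AddMonoidAlgebra.single (1 : ℤ) α : Lau) + (AddMonoidAlgebra.single (0 : ℤ) (β : ℂ) : Lau) +
      (AddMonoidAlgebra.single (-1 : ℤ) ((starRingEnd ℂ) α) : Lau)) (m : ℤ) :
    substar (ℓ * (AddMonoidAlgebra.single m 1 : Lau))
      = ℓ * (AddMonoidAlgebra.single (-m) 1 : Lau) := by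
  rw [ell_mul_single α β ℓ hℓ m, substar_add, substar_add, substar_single, substar_single,
    substar_single, ell_mul_single α β ℓ hℓ (-m)]
  simp only [Complex.conj_conj, Complex.conj_ofReal]
  rw [show -(m+1) = -m - 1 by ring, show -(m-1) = -m + 1 by ring]
  abel


/-- A solution w of wℓ = v (ℓ Hermitian of degree one, v Hermitian with v[1] ≠ 0)
is Hermitian iff it is Hermitian on 𝕃₁ = span{1, z, z⁻¹}. -/
theorem stmt11 (α : ℂ) (hα : α ≠ 0) (β : ℝ)
    (ℓ : Lau)
    (hℓ : ℓ = (AddMonoidAlgebra.single (1 : ℤ) α : Lau) + (AddMonoidAlgebra.single (0 : ℤ) (β : ℂ) : Lau) +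
      (AddMonoidAlgebra.single (-1 : ℤ) ((starRingEnd ℂ) α) : Lau))
    (v w : Lau →ₗ[ℂ] ℂ)
    (hvHerm : ∀ f : Lau, v (substar f) = (starRingEnd ℂ) (v f))
    (hv1 : v (AddMonoidAlgebra.single (0 : ℤ) (1 : ℂ) : Lau) ≠ 0)
    (hw : ∀ f : Lau, w (ℓ * f) = v f) :
    (∀ f : Lau, w (substar f) = (starRingEnd ℂ) (w f)) ↔
      (∀ f ∈ Submodule.span ℂ ({(AddMonoidAlgebra.single (0 : ℤ) (1 : ℂ) : Lau),
          (AddMonoidAlgebra.single (1 : ℤ) (1 : ℂ) : Lau),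
          (AddMonoidAlgebra.single (-1 : ℤ) (1 : ℂ) : Lau)} : Set Lau),
        w (substar f) = (starRingEnd ℂ) (w f)) := by

  constructor
  · exact fun h f _ => h f
  intro h
  set Z : ℤ → Lau := fun m => AddMonoidAlgebra.single m 1 with hZ
  set S : Submodule ℂ Lau :=
    { carrier := {f | w (substar f) = (starRingEnd ℂ) (w f)}
      add_mem' := by
        intro f g hf hg
        simp only [Set.mem_setOf_eq] at *
        rw [substar_add, map_add, hf, hg, map_add, map_add]
      zero_mem' := by simp [substar_zero]
      smul_mem' := by
        intro c f hf
        simp only [Set.mem_setOf_eq] at *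
        rw [substar_smul, map_smul, map_smul, smul_eq_mul, smul_eq_mul, hf, map_mul] } with hS
  have hmem : ∀ f : Lau, f ∈ S ↔ w (substar f) = (starRingEnd ℂ) (w f) := fun f => Iff.rfl
  -- base cases
  have h0 : Z 0 ∈ S := (hmem _).2 (h _ (Submodule.subset_span (Set.mem_insert _ _)))
  have h1 : Z 1 ∈ S :=
    (hmem _).2 (h _ (Submodule.subset_span (Set.mem_insert_of_mem _ (Set.mem_insert _ _))))
  have hm1 : Z (-1) ∈ S :=
    (hmem _).2 (h _ (Submodule.subset_span (Set.mem_insert_of_mem _ (Set.mem_insert_of_mem _ rfl))))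
  -- the step lemma: ℓ * z^m ∈ S
  have hstep : ∀ m : ℤ, (ℓ * Z m) ∈ S := by
    intro m
    rw [hmem, substar_ell_mul α β ℓ hℓ m, hw, hw]
    have hsub : substar (Z m) = (AddMonoidAlgebra.single (-m) 1 : Lau) := by
      rw [hZ]; dsimp only; rw [substar_single, map_one]
    rw [← hsub, hvHerm]
  have expand : ∀ m : ℤ, ℓ * Z m = α • Z (m+1) + (β : ℂ) • Z m
      + ((starRingEnd ℂ) α) • Z (m-1) := by
    intro m
    rw [ell_mul_single α β ℓ hℓ m, hZ]
    dsimp only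
    simp only [AddMonoidAlgebra.smul_single', mul_one]
  have up : ∀ m : ℤ, Z m ∈ S → Z (m-1) ∈ S → Z (m+1) ∈ S := by
    intro m hm hm'
    have e : Z (m+1) = α⁻¹ • (ℓ * Z m - (β : ℂ) • Z m - ((starRingEnd ℂ) α) • Z (m-1)) := by
      rw [expand m]
      rw [show α • Z (m+1) + (β : ℂ) • Z m + ((starRingEnd ℂ) α) • Z (m-1)
          - (β : ℂ) • Z m - ((starRingEnd ℂ) α) • Z (m-1) = α • Z (m+1) by abel]
      rw [smul_smul, inv_mul_cancel₀ hα, one_smul]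
    rw [e]
    exact S.smul_mem _ (S.sub_mem (S.sub_mem (hstep m) (S.smul_mem _ hm)) (S.smul_mem _ hm'))
  have down : ∀ m : ℤ, Z m ∈ S → Z (m+1) ∈ S → Z (m-1) ∈ S := by
    intro m hm hm'
    have hα' : (starRingEnd ℂ) α ≠ 0 := by simpa using hα
    have e : Z (m-1) = ((starRingEnd ℂ) α)⁻¹ • (ℓ * Z m - α • Z (m+1) - (β : ℂ) • Z m) := by
      rw [expand m]
      rw [show α • Z (m+1) + (β : ℂ) • Z m + ((starRingEnd ℂ) α) • Z (m-1)
          - α • Z (m+1) - (β : ℂ) • Z m = ((starRingEnd ℂ) α) • Z (m-1) by abel]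
      rw [smul_smul, inv_mul_cancel₀ hα', one_smul]
    rw [e]
    exact S.smul_mem _ (S.sub_mem (S.sub_mem (hstep m) (S.smul_mem _ hm')) (S.smul_mem _ hm))
  have pos : ∀ n : ℕ, Z n ∈ S ∧ Z (n+1) ∈ S := by
    intro n
    induction n with
    | zero => exact ⟨by rw [Nat.cast_zero]; exact h0, by rw [Nat.cast_zero, zero_add]; exact h1⟩
    | succ k ih =>
      constructor
      · rw [Nat.cast_succ]; exact ih.2
      · rw [Nat.cast_succ]
        exact up ((k:ℤ)+1) ih.2 (by rw [show ((k:ℤ)+1)-1 = (k:ℤ) by ring]; exact ih.1)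
  have neg : ∀ n : ℕ, Z (-n) ∈ S ∧ Z (-(n:ℤ)-1) ∈ S := by
    intro n
    induction n with
    | zero =>
      exact ⟨by rw [Nat.cast_zero, neg_zero]; exact h0,
        by rw [Nat.cast_zero, neg_zero, zero_sub]; exact hm1⟩
    | succ k ih =>
      have e1 : -((k+1:ℕ):ℤ) = -(k:ℤ)-1 := by push_cast; ring
      constructor
      · rw [e1]; exact ih.2
      · rw [e1]
        exact down (-(k:ℤ)-1) ih.2 (by rw [show (-(k:ℤ)-1)+1 = -(k:ℤ) by ring]; exact ih.1)
  have key : ∀ m : ℤ, Z m ∈ S := by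
    intro m
    rcases le_or_gt 0 m with hm | hm
    · lift m to ℕ using hm
      exact (pos m).1
    · obtain ⟨n, rfl⟩ : ∃ n : ℕ, m = -(n : ℤ) := ⟨m.natAbs, by omega⟩
      exact (neg n).1
  have keyc : ∀ (m : ℤ) (c : ℂ), (AddMonoidAlgebra.single m c : Lau) ∈ S := by
    intro m c
    have : (AddMonoidAlgebra.single m c : Lau) = c • Z m := by
      rw [hZ]; dsimp only; rw [AddMonoidAlgebra.smul_single', mul_one]
    rw [this]
    exact S.smul_mem _ (key m)
  have hall : ∀ f : Lau, f ∈ S := by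
    intro f
    induction f using AddMonoidAlgebra.induction_linear with
    | zero => exact S.zero_mem
    | add f g hf hg => exact S.add_mem hf hg
    | single m c => exact keyc m c
  exact fun f => (hmem f).1 (hall f)
end
end

section
/- An infinite Hermitian complex matrix M admits a generalized Cholesky factorization M = A E A⁺, with A lower triangular with positive diagonal entries and E a diagonal matrix with entries ±1, if and only if M is quasi-definite, i.e., every finite leading principal submatrix M_n is nonsingular. Moreover, such a factorization is unique. -/
/-- Lower triangular infinite matrix. -/
def LowerTri (A : ℕ → ℕ → ℂ) : Prop := ∀ i j : ℕ, i < j → A i j = 0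

/-- The diagonal entries are positive reals. -/
def PosDiag (A : ℕ → ℕ → ℂ) : Prop := ∀ i : ℕ, 0 < (A i i).re ∧ (A i i).im = 0

/-- A sign sequence (diagonal of a sign matrix). -/
def IsSign (E : ℕ → ℝ) : Prop := ∀ i : ℕ, E i = 1 ∨ E i = -1

/-- Hermitian infinite matrix. -/
def HermM (M : ℕ → ℕ → ℂ) : Prop := ∀ i j : ℕ, M i j = (starRingEnd ℂ) (M j i)

/-- Generalized Cholesky factorization M = A E A⁺. -/
def GCF (M A : ℕ → ℕ → ℂ) (E : ℕ → ℝ) : Prop :=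
  LowerTri A ∧ PosDiag A ∧ IsSign E ∧
    ∀ i k : ℕ, M i k = ∑ᶠ j, A i j * (E j : ℂ) * (starRingEnd ℂ) (A k j)

/-- Cholesky factorization M = A A⁺. -/
def CF (M A : ℕ → ℕ → ℂ) : Prop :=
  LowerTri A ∧ PosDiag A ∧ ∀ i k : ℕ, M i k = ∑ᶠ j, A i j * (starRingEnd ℂ) (A k j)

/-- Quasi-definiteness: all leading principal submatrices are nonsingular. -/
def QuasiDef (M : ℕ → ℕ → ℂ) : Prop :=
  ∀ n : ℕ, (Matrix.of fun i j : Fin n => M i j).det ≠ 0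

/-- The quadratic form X M X⁺ on finitely supported row vectors. -/
noncomputable def quadForm (M : ℕ → ℕ → ℂ) (X : ℕ →₀ ℂ) : ℂ :=
  ∑ i ∈ X.support, ∑ j ∈ X.support, X i * M i j * (starRingEnd ℂ) (X j)

/-- Positive definiteness: X M X⁺ > 0 for all finitely supported nonzero X. -/
noncomputable def PosDefM (M : ℕ → ℕ → ℂ) : Prop :=
  ∀ X : ℕ →₀ ℂ, X ≠ 0 → 0 < (quadForm M X).re ∧ (quadForm M X).im = 0

/-! Column by column, `M = A E A⁺` forces `E j * |A j j|² = r j` with the pivot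
`r j = M j j - ∑_{l<j} E l * |A j l|²`, and for `i > j`
`A i j * E j * A j j = M i j - ∑_{l<j} A i l * E l * conj (A j l)`.
So the factorization exists exactly when every pivot is nonzero, and is then unique:
`E j = sign (r j)` and `A j j = √|r j|`. Since `A` is triangular, `det M_{n+1} = ∏_{j ≤ n} r j`,
so the pivots are all nonzero exactly when `M` is quasi-definite. -/

open Finset Complex ComplexConjugate
open scoped Matrix

lemma mul_ofReal_mul_conj (z : ℂ) (r : ℝ) : z * r * conj z = ((r * normSq z : ℝ) : ℂ) := by
  rw [mul_right_comm, mul_conj]; push_cast; ring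

lemma HermM.ofReal_re_diag {M : ℕ → ℕ → ℂ} (hM : HermM M) (j : ℕ) : ((M j j).re : ℂ) = M j j :=
  conj_eq_iff_re.1 (hM j j).symm

lemma PosDiag.diag_ne_zero {A : ℕ → ℕ → ℂ} (hA : PosDiag A) (i : ℕ) : A i i ≠ 0 := fun h =>
  (hA i).1.ne' (by rw [h, zero_re])

lemma IsSign.ne_zero {E : ℕ → ℝ} (hE : IsSign E) (i : ℕ) : E i ≠ 0 := by
  rcases hE i with h | h <;> rw [h] <;> norm_num

section LowerTri

variable {A : ℕ → ℕ → ℂ}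

lemma LowerTri.finsum_eq_sum_range (hA : LowerTri A) (d : ℕ → ℂ) {i k n : ℕ}
    (h : min i k < n) :
    ∑ᶠ j, A i j * d j * conj (A k j) = ∑ j ∈ range n, A i j * d j * conj (A k j) := by
  refine finsum_eq_finsetSum_of_support_subset _ fun j hj => ?_
  rw [coe_range, Set.mem_Iio]
  by_contra! hnj
  rcases min_lt_iff.1 (h.trans_le hnj) with hi | hk
  · exact hj (by simp [hA i j hi])
  · exact hj (by simp [hA k j hk])

lemma LowerTri.det_leading_eq_prod (hA : LowerTri A) {M : ℕ → ℕ → ℂ} (d : ℕ → ℂ) (n : ℕ)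
    (hM : ∀ i k : Fin n, M i k = ∑ᶠ j, A i j * d j * conj (A k j)) :
    (Matrix.of fun i k : Fin n => M i k).det = ∏ i : Fin n, A i i * d i * conj (A i i) := by
  set L : Matrix (Fin n) (Fin n) ℂ := Matrix.of fun i j => A i j
  have hL : L.IsLowerTriangular := fun i j hij => hA i j hij
  have hfac : (Matrix.of fun i k : Fin n => M i k) =
      L * Matrix.diagonal (fun i : Fin n => d i) * Lᴴ := by
    ext i k
    rw [Matrix.of_apply, hM, hA.finsum_eq_sum_range d (min_lt_of_left_lt i.isLt),
      ← Fin.sum_univ_eq_sum_range (fun j => A i j * d j * conj (A k j)), Matrix.mul_apply]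
    simp [L, Matrix.conjTranspose_apply]
  rw [hfac, Matrix.det_mul, Matrix.det_mul, Matrix.det_conjTranspose, Matrix.det_diagonal,
    Matrix.det_of_isLowerTriangular L hL, star_prod, ← prod_mul_distrib, ← prod_mul_distrib]
  rfl

end LowerTri

/-- Column `j` of the factor and the sign `E j`, by the Cholesky–Banachiewicz recursion with
signed pivots. -/
noncomputable def cholColumn (M : ℕ → ℕ → ℂ) (j : ℕ) : (ℕ → ℂ) × ℝ :=
  let pivot : ℝ := (M j j).re - ∑ l : Fin j, (cholColumn M l).2 * normSq ((cholColumn M l).1 j)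
  let sign : ℝ := if pivot < 0 then -1 else 1
  (fun i => if i < j then 0 else if i = j then (√|pivot| : ℝ) else
    (M i j - ∑ l : Fin j, (cholColumn M l).1 i * (cholColumn M l).2 * conj ((cholColumn M l).1 j))
      / (sign * √|pivot|), sign)
termination_by j
decreasing_by all_goals exact l.isLt

noncomputable def cholFactor (M : ℕ → ℕ → ℂ) (i j : ℕ) : ℂ := (cholColumn M j).1 i

noncomputable def cholSign (M : ℕ → ℕ → ℂ) (j : ℕ) : ℝ := (cholColumn M j).2

noncomputable def cholPivot (M : ℕ → ℕ → ℂ) (j : ℕ) : ℝ :=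
  (M j j).re - ∑ l ∈ range j, cholSign M l * normSq (cholFactor M j l)

section Cholesky

variable (M : ℕ → ℕ → ℂ)

lemma cholColumn_eq (j : ℕ) : cholColumn M j =
    (fun i => if i < j then (0 : ℂ) else if i = j then ((√|cholPivot M j| : ℝ) : ℂ) else
      (M i j - ∑ l ∈ range j, cholFactor M i l * cholSign M l * conj (cholFactor M j l))
        / ((if cholPivot M j < 0 then -1 else 1 : ℝ) * √|cholPivot M j|),
     if cholPivot M j < 0 then -1 else 1) := by
  rw [cholColumn, cholPivot]
  simp only [← Fin.sum_univ_eq_sum_range]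
  rfl

lemma cholSign_eq (j : ℕ) : cholSign M j = if cholPivot M j < 0 then -1 else 1 := by
  rw [cholSign, cholColumn_eq]

lemma cholFactor_of_lt {i j : ℕ} (h : i < j) : cholFactor M i j = 0 := by
  rw [cholFactor, cholColumn_eq]
  exact if_pos h

lemma cholFactor_self (j : ℕ) : cholFactor M j j = (√|cholPivot M j| : ℝ) := by
  rw [cholFactor, cholColumn_eq]
  simp

lemma cholFactor_of_gt {i j : ℕ} (h : j < i) : cholFactor M i j =
    (M i j - ∑ l ∈ range j, cholFactor M i l * cholSign M l * conj (cholFactor M j l))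
      / ((cholSign M j : ℂ) * (√|cholPivot M j| : ℝ)) := by
  rw [cholFactor, cholColumn_eq, cholSign_eq]
  simp [h.not_gt, h.ne']

lemma lowerTri_cholFactor : LowerTri (cholFactor M) := fun _ _ h => cholFactor_of_lt M h

lemma isSign_cholSign : IsSign (cholSign M) := fun j => by
  rw [cholSign_eq]
  split_ifs <;> simp

lemma cholSign_mul_normSq_cholFactor_self (j : ℕ) :
    cholSign M j * normSq (cholFactor M j j) = cholPivot M j := by
  rw [cholFactor_self, normSq_ofReal, Real.mul_self_sqrt (abs_nonneg _), cholSign_eq]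
  split_ifs with h
  · rw [abs_of_neg h, neg_one_mul, neg_neg]
  · rw [abs_of_nonneg (not_lt.1 h), one_mul]

variable {M}

lemma entry_eq_sum_cholFactor_of_le (hM : HermM M) {i k : ℕ} (hki : k ≤ i)
    (hpiv : ∀ l < i, cholPivot M l ≠ 0) :
    M i k = ∑ j ∈ range (k + 1), cholFactor M i j * cholSign M j * conj (cholFactor M k j) := by
  rw [sum_range_succ]
  rcases hki.eq_or_lt with rfl | hki
  · have hsum : ∑ j ∈ range k, cholFactor M k j * cholSign M j * conj (cholFactor M k j)
        = ((M k k).re - cholPivot M k : ℝ) := by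
      rw [cholPivot, sub_sub_cancel, ofReal_sum]
      exact sum_congr rfl fun l _ => mul_ofReal_mul_conj _ _
    rw [hsum, mul_ofReal_mul_conj, cholSign_mul_normSq_cholFactor_self, ← ofReal_add, sub_add_cancel,
      hM.ofReal_re_diag]
  · have hpos : 0 < √|cholPivot M k| := Real.sqrt_pos.2 (abs_pos.2 (hpiv k hki))
    have hd : (cholSign M k : ℂ) * (√|cholPivot M k| : ℝ) ≠ 0 :=
      mul_ne_zero (ofReal_ne_zero.2 ((isSign_cholSign M).ne_zero k)) (ofReal_ne_zero.2 hpos.ne')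
    rw [cholFactor_of_gt M hki, cholFactor_self, conj_ofReal, mul_assoc, div_mul_cancel₀ _ hd,
      add_sub_cancel]

lemma entry_eq_finsum_cholFactor (hM : HermM M) {i k : ℕ}
    (hpiv : ∀ l < max i k, cholPivot M l ≠ 0) :
    M i k = ∑ᶠ j, cholFactor M i j * cholSign M j * conj (cholFactor M k j) := by
  rw [(lowerTri_cholFactor M).finsum_eq_sum_range _ (Nat.lt_succ_self (min i k))]
  rcases le_total k i with hki | hik
  · rw [min_eq_right hki]
    exact entry_eq_sum_cholFactor_of_le hM hki fun l hl => hpiv l (lt_max_of_lt_left hl)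
  · rw [min_eq_left hik, hM, entry_eq_sum_cholFactor_of_le hM hik fun l hl =>
      hpiv l (lt_max_of_lt_right hl), map_sum]
    refine sum_congr rfl fun j _ => ?_
    rw [map_mul, map_mul, conj_conj, conj_ofReal]
    ring

lemma det_leading_eq_prod_cholPivot (hM : HermM M) (n : ℕ) (hpiv : ∀ l < n, cholPivot M l ≠ 0) :
    (Matrix.of fun i k : Fin (n + 1) => M i k).det = ∏ i : Fin (n + 1), (cholPivot M i : ℂ) := by
  rw [(lowerTri_cholFactor M).det_leading_eq_prod _ _ fun i k =>
    entry_eq_finsum_cholFactor hM fun l hl => hpiv l (by omega)]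
  refine prod_congr rfl fun i _ => ?_
  rw [mul_ofReal_mul_conj, cholSign_mul_normSq_cholFactor_self]

lemma cholPivot_ne_zero (hM : HermM M) (hq : QuasiDef M) (n : ℕ) : cholPivot M n ≠ 0 := by
  induction n using Nat.strong_induction_on with
  | _ n ih =>
    have hdet := hq (n + 1)
    rw [det_leading_eq_prod_cholPivot hM n ih] at hdet
    exact_mod_cast prod_ne_zero_iff.1 hdet (Fin.last n) (mem_univ _)

theorem gcf_cholFactor (hM : HermM M) (hq : QuasiDef M) : GCF M (cholFactor M) (cholSign M) := by
  refine ⟨lowerTri_cholFactor M, fun j => ?_, isSign_cholSign M, fun i k =>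
    entry_eq_finsum_cholFactor hM fun l _ => cholPivot_ne_zero hM hq l⟩
  rw [cholFactor_self, ofReal_re, ofReal_im]
  exact ⟨Real.sqrt_pos.2 (abs_pos.2 (cholPivot_ne_zero hM hq j)), rfl⟩

end Cholesky

section Uniqueness

variable {M A A₁ A₂ : ℕ → ℕ → ℂ} {E E₁ E₂ : ℕ → ℝ}

theorem GCF.quasiDef (h : GCF M A E) : QuasiDef M := by
  obtain ⟨hA, hpos, hE, hM⟩ := h
  intro n
  rw [hA.det_leading_eq_prod _ n fun i k => hM i k]
  refine prod_ne_zero_iff.2 fun i _ => ?_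
  rw [mul_ofReal_mul_conj, ofReal_ne_zero]
  exact mul_ne_zero (hE.ne_zero i) (normSq_pos.2 (hpos.diag_ne_zero i)).ne'

lemma GCF.entry_eq_sum_range_add (h : GCF M A E) {i j : ℕ} (hji : j ≤ i) :
    M i j = ∑ l ∈ range j, A i l * E l * conj (A j l) + A i j * E j * conj (A j j) := by
  rw [h.2.2.2, h.1.finsum_eq_sum_range _ (show min i j < j + 1 by omega), sum_range_succ]

lemma sign_mul_normSq_inj {a b : ℂ} {e f : ℝ} (ha : 0 < a.re ∧ a.im = 0)
    (hb : 0 < b.re ∧ b.im = 0) (he : e = 1 ∨ e = -1) (hf : f = 1 ∨ f = -1)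
    (h : e * normSq a = f * normSq b) : e = f ∧ a = b := by
  rw [normSq_apply, normSq_apply, ha.2, hb.2] at h
  obtain ⟨hef, hre⟩ : e = f ∧ a.re = b.re := by
    rcases he with rfl | rfl <;> rcases hf with rfl | rfl <;> constructor <;> nlinarith [ha.1, hb.1]
  exact ⟨hef, Complex.ext hre (ha.2.trans hb.2.symm)⟩

lemma GCF.column_eq (h₁ : GCF M A₁ E₁) (h₂ : GCF M A₂ E₂) {j : ℕ}
    (ih : ∀ l < j, (∀ i, A₁ i l = A₂ i l) ∧ E₁ l = E₂ l) :
    (∀ i, A₁ i j = A₂ i j) ∧ E₁ j = E₂ j := by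
  have head : ∀ i, j ≤ i → A₁ i j * E₁ j * conj (A₁ j j) = A₂ i j * E₂ j * conj (A₂ j j) := by
    intro i hji
    have hsum : ∑ l ∈ range j, A₁ i l * E₁ l * conj (A₁ j l)
        = ∑ l ∈ range j, A₂ i l * E₂ l * conj (A₂ j l) :=
      sum_congr rfl fun l hl => by
        obtain ⟨hA, hE⟩ := ih l (mem_range.1 hl)
        rw [hA, hA, hE]
    have hM := (h₁.entry_eq_sum_range_add hji).symm.trans (h₂.entry_eq_sum_range_add hji)
    rw [hsum] at hM
    exact add_left_cancel hM
  obtain ⟨hA₁, hpos₁, hE₁, -⟩ := h₁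
  obtain ⟨hA₂, hpos₂, hE₂, -⟩ := h₂
  obtain ⟨hE, hdiag⟩ : E₁ j = E₂ j ∧ A₁ j j = A₂ j j := by
    have hjj := head j le_rfl
    rw [mul_ofReal_mul_conj, mul_ofReal_mul_conj, ofReal_inj] at hjj
    exact sign_mul_normSq_inj (hpos₁ j) (hpos₂ j) (hE₁ j) (hE₂ j) hjj
  refine ⟨fun i => ?_, hE⟩
  rcases lt_or_ge i j with hij | hji
  · rw [hA₁ i j hij, hA₂ i j hij]
  · have hd : (E₂ j : ℂ) * conj (A₂ j j) ≠ 0 :=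
      mul_ne_zero (ofReal_ne_zero.2 (hE₂.ne_zero j)) ((map_ne_zero _).2 (hpos₂.diag_ne_zero j))
    have hij := head i hji
    rw [hE, hdiag, mul_assoc, mul_assoc] at hij
    exact mul_right_cancel₀ hd hij

theorem GCF.unique (h₁ : GCF M A₁ E₁) (h₂ : GCF M A₂ E₂) : A₁ = A₂ ∧ E₁ = E₂ := by
  have hcol : ∀ j, (∀ i, A₁ i j = A₂ i j) ∧ E₁ j = E₂ j := fun j =>
    Nat.strong_induction_on j fun _ ih => h₁.column_eq h₂ ih
  exact ⟨funext fun i => funext fun j => (hcol j).1 i, funext fun j => (hcol j).2⟩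

end Uniqueness

/-- An infinite Hermitian matrix has a (unique) generalized Cholesky factorization
M = A E A⁺ iff it is quasi-definite. -/
theorem stmt14 (M : ℕ → ℕ → ℂ) (hM : HermM M) :
    ((∃ A E, GCF M A E) ↔ QuasiDef M) ∧
    (∀ A₁ E₁ A₂ E₂, GCF M A₁ E₁ → GCF M A₂ E₂ → A₁ = A₂ ∧ E₁ = E₂) :=
  ⟨⟨fun ⟨_, _, h⟩ => h.quasiDef, fun hq => ⟨_, _, gcf_cholFactor hM hq⟩⟩,
    fun _ _ _ _ h₁ h₂ => h₁.unique h₂⟩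
end

section
/- An infinite Hermitian complex matrix M admits a Cholesky factorization M = A A⁺, with A lower triangular with positive diagonal entries, if and only if M is positive definite, i.e., X M X⁺ > 0 for every finitely supported nonzero row vector X (equivalently all leading principal minors are positive). Moreover, the factorization is unique. -/
/-!
Positive definiteness makes `⟪x, y⟫ := y M x⁺` an inner product on finitely supported vectors,
with `M i k = ⟪e k, e i⟫` for the unit vectors `e i`. Orthonormalising `(e i)` by Gram–Schmidt
into `(u j)` gives the Cholesky factor `A i j = ⟪u j, e i⟫`: since `e i ∈ span (u 0, …, u i)`
we get `M = A A⁺`, and `u j ⟂ e i` for `i < j` while `⟪u i, e i⟫ = ‖gramSchmidt e i‖ > 0`.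
Conversely, `M = A A⁺` gives `X M X⁺ = ∑ j, |(X A) j|²`, whose term at the last index of the
support of `X` is nonzero because `A` is lower triangular with nonzero diagonal. Uniqueness:
column by column, `M i j = ∑ k ≤ j, A i k * conj (A j k)` first determines the positive
`A j j` and then every `A i j` with `i > j`.
-/

open Finset InnerProductSpace ComplexConjugate

theorem PosDiag.apply_ne_zero {A : ℕ → ℕ → ℂ} (h : PosDiag A) (i : ℕ) : A i i ≠ 0 := fun h0 => by
  simpa [h0] using (h i).1

theorem eq_of_mul_conj_eq_of_pos {z w : ℂ} (hz : 0 < z.re ∧ z.im = 0) (hw : 0 < w.re ∧ w.im = 0)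
    (h : z * conj z = w * conj w) : z = w := by
  rw [Complex.mul_conj, Complex.mul_conj, Complex.ofReal_inj, Complex.normSq_apply,
    Complex.normSq_apply, hz.2, hw.2, mul_zero, add_zero, add_zero] at h
  exact Complex.ext ((mul_self_inj hz.1.le hw.1.le).mp h) (hz.2.trans hw.2.symm)

namespace CF

variable {M A : ℕ → ℕ → ℂ}

theorem apply_eq_sum_range (h : CF M A) {i k N : ℕ} (hN : min i k < N) :
    M i k = ∑ j ∈ range N, A i j * conj (A k j) := by
  rw [h.2.2 i k]
  refine finsum_eq_sum_of_support_subset _ fun j hj => ?_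
  by_contra hjN
  simp only [coe_range, Set.mem_Iio, not_lt] at hjN
  rcases min_choice i k with hm | hm <;> rw [hm] at hN
  · simp [h.1 i j (by omega)] at hj
  · simp [h.1 k j (by omega)] at hj

theorem mul_conj_diag (h : CF M A) {i j : ℕ} (hji : j ≤ i) :
    A i j * conj (A j j) = M i j - ∑ k ∈ range j, A i k * conj (A j k) := by
  rw [h.apply_eq_sum_range (N := j + 1) (by omega), sum_range_succ, add_sub_cancel_left]

theorem quadForm_eq_sum_normSq (h : CF M A) (X : ℕ →₀ ℂ) {N : ℕ} (hX : X.support ⊆ range N) :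
    quadForm M X = ∑ j ∈ range N, (Complex.normSq (∑ i ∈ X.support, X i * A i j) : ℂ) := by
  simp_rw [← Complex.mul_conj, map_sum, sum_mul_sum, map_mul]
  rw [sum_comm]
  refine sum_congr rfl fun i hi => ?_
  rw [sum_comm]
  refine sum_congr rfl fun k _ => ?_
  rw [h.apply_eq_sum_range (N := N) ((min_le_left _ _).trans_lt (mem_range.mp (hX hi))), mul_sum,
    sum_mul]
  exact sum_congr rfl fun j _ => by ring

theorem posDefM (h : CF M A) : PosDefM M := by
  intro X hX
  have hS : X.support.Nonempty := Finsupp.support_nonempty_iff.mpr hX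
  set m := X.support.max' hS
  have hXm : X.support ⊆ range (m + 1) := fun i hi =>
    mem_range.mpr (Nat.lt_succ_of_le (X.support.le_max' i hi))
  have hlast : ∑ i ∈ X.support, X i * A i m = X m * A m m :=
    sum_eq_single_of_mem m (max'_mem _ _) fun i hi him => by
      rw [h.1 i m ((le_max' _ i hi).lt_of_ne him), mul_zero]
  have hpos : 0 < Complex.normSq (X m * A m m) := Complex.normSq_pos.mpr
    (mul_ne_zero (Finsupp.mem_support_iff.mp (max'_mem _ _)) (h.2.1.apply_ne_zero m))
  rw [h.quadForm_eq_sum_normSq X hXm, ← Complex.ofReal_sum, Complex.ofReal_re, Complex.ofReal_im]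
  refine ⟨hpos.trans_le ?_, rfl⟩
  rw [← hlast]
  exact single_le_sum (f := fun j => Complex.normSq (∑ i ∈ X.support, X i * A i j))
    (fun j _ => Complex.normSq_nonneg _) (self_mem_range_succ m)

theorem unique {A₁ A₂ : ℕ → ℕ → ℂ} (h₁ : CF M A₁) (h₂ : CF M A₂) : A₁ = A₂ := by
  suffices hcol : ∀ j i, A₁ i j = A₂ i j from funext fun i => funext fun j => hcol j i
  refine fun j => Nat.strong_induction_on j fun j ih => ?_
  have hsum : ∀ i, ∑ k ∈ range j, A₁ i k * conj (A₁ j k) =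
      ∑ k ∈ range j, A₂ i k * conj (A₂ j k) := fun i =>
    sum_congr rfl fun k hk => by rw [ih k (mem_range.mp hk), ih k (mem_range.mp hk)]
  have hdiag : A₁ j j = A₂ j j := eq_of_mul_conj_eq_of_pos (h₁.2.1 j) (h₂.2.1 j) <| by
    rw [h₁.mul_conj_diag le_rfl, h₂.mul_conj_diag le_rfl, hsum]
  intro i
  rcases lt_or_ge i j with hij | hji
  · rw [h₁.1 i j hij, h₂.1 i j hij]
  · have h := h₁.mul_conj_diag hji
    rw [hsum, ← h₂.mul_conj_diag hji, hdiag] at h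
    exact mul_right_cancel₀ ((map_ne_zero _).mpr (h₂.2.1.apply_ne_zero j)) h

end CF

section GramSchmidt

variable {E : Type*} [NormedAddCommGroup E] [InnerProductSpace ℂ E]

noncomputable def gramCholesky (v : ℕ → E) (i j : ℕ) : ℂ :=
  inner ℂ (gramSchmidtNormed ℂ v j) (v i)

theorem lowerTri_gramCholesky (v : ℕ → E) : LowerTri (gramCholesky v) := fun i j hij => by
  simp [gramCholesky, gramSchmidtNormed, gramSchmidt_inv_triangular ℂ v hij]

theorem inner_gramSchmidt_apply_self (v : ℕ → E) (i : ℕ) :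
    inner ℂ (gramSchmidt ℂ v i) (v i) = inner ℂ (gramSchmidt ℂ v i) (gramSchmidt ℂ v i) := by
  conv_lhs => rw [gramSchmidt_def'' ℂ v i]
  rw [inner_add_right, inner_sum, add_eq_left]
  refine sum_eq_zero fun j hj => ?_
  rw [inner_smul_right, gramSchmidt_orthogonal ℂ v (mem_Iio.mp hj).ne', mul_zero]

theorem posDiag_gramCholesky {v : ℕ → E} (hv : LinearIndependent ℂ v) :
    PosDiag (gramCholesky v) := by
  intro i
  have hpos : 0 < ‖gramSchmidt ℂ v i‖ := norm_pos_iff.mpr (gramSchmidt_ne_zero i hv)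
  have : gramCholesky v i i = (‖gramSchmidt ℂ v i‖ : ℂ) := by
    rw [gramCholesky, gramSchmidtNormed, inner_smul_left, inner_gramSchmidt_apply_self,
      inner_self_eq_norm_sq_to_K]
    simp only [Complex.coe_algebraMap, map_inv₀, Complex.conj_ofReal]
    field_simp
  simp [this, hpos]

theorem exists_linearCombination_gramCholesky {v : ℕ → E} (hv : LinearIndependent ℂ v) (i : ℕ) :
    ∃ l : ℕ →₀ ℂ, Finsupp.linearCombination ℂ (gramSchmidtNormed ℂ v) l = v i ∧
      ⇑l = gramCholesky v i := by
  have hmem : v i ∈ Submodule.span ℂ (gramSchmidtNormed ℂ v '' Set.Iic i) := by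
    rw [span_gramSchmidtNormed, span_gramSchmidt_Iic]
    exact Submodule.subset_span ⟨i, Set.mem_Iic.mpr le_rfl, rfl⟩
  obtain ⟨l, -, hl⟩ := (Finsupp.mem_span_image_iff_linearCombination ℂ).mp hmem
  refine ⟨l, hl, funext fun j => ?_⟩
  rw [gramCholesky, ← hl, (gramSchmidtNormed_orthonormal hv).inner_right_finsupp]

theorem cf_gramCholesky {v : ℕ → E} (hv : LinearIndependent ℂ v) :
    CF (fun i k => inner ℂ (v k) (v i)) (gramCholesky v) := by
  refine ⟨lowerTri_gramCholesky v, posDiag_gramCholesky hv, fun i k => ?_⟩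
  obtain ⟨li, hvi, hli⟩ := exists_linearCombination_gramCholesky hv i
  obtain ⟨lk, hvk, hlk⟩ := exists_linearCombination_gramCholesky hv k
  dsimp only
  rw [← hvi, ← hvk, (gramSchmidtNormed_orthonormal hv).inner_finsupp_eq_sum_left, Finsupp.sum,
    ← hli, ← hlk]
  symm
  refine (finsum_eq_sum_of_support_subset _ fun j hj => ?_).trans
    (sum_congr rfl fun j _ => mul_comm _ _)
  simpa using right_ne_zero_of_mul hj

end GramSchmidt

/-- `sesqForm M x y = y M x⁺`, conjugate-linear in `x` like Mathlib's `inner`. -/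
noncomputable def sesqForm (M : ℕ → ℕ → ℂ) (x y : ℕ →₀ ℂ) : ℂ :=
  Finsupp.linearCombination ℂ (fun i => x.sum fun j b => M i j * conj b) y

theorem sesqForm_self (M : ℕ → ℕ → ℂ) (x : ℕ →₀ ℂ) : sesqForm M x x = quadForm M x := by
  simp [sesqForm, quadForm, Finsupp.linearCombination_apply, Finsupp.sum, mul_sum, mul_assoc]

theorem sesqForm_single_single (M : ℕ → ℕ → ℂ) (i k : ℕ) :
    sesqForm M (Finsupp.single k 1) (Finsupp.single i 1) = M i k := by
  simp [sesqForm]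

theorem conj_sesqForm {M : ℕ → ℕ → ℂ} (hM : HermM M) (x y : ℕ →₀ ℂ) :
    conj (sesqForm M y x) = sesqForm M x y := by
  simp only [sesqForm, Finsupp.linearCombination_apply, Finsupp.sum, map_sum, map_mul, smul_eq_mul,
    mul_sum, Complex.conj_conj]
  rw [sum_comm]
  refine sum_congr rfl fun i _ => sum_congr rfl fun j _ => ?_
  rw [hM j i, Complex.conj_conj]
  ring

@[reducible]
noncomputable def innerCoreOfPosDefM {M : ℕ → ℕ → ℂ} (hM : HermM M) (hP : PosDefM M) :
    InnerProductSpace.Core ℂ (ℕ →₀ ℂ) where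
  inner := sesqForm M
  conj_inner_symm := conj_sesqForm hM
  re_inner_nonneg x := by
    rcases eq_or_ne x 0 with rfl | hx
    · simp [sesqForm]
    · exact (sesqForm_self M x ▸ hP x hx).1.le
  add_left x y z := by
    rw [← conj_sesqForm hM, sesqForm, map_add, map_add, ← sesqForm, ← sesqForm, conj_sesqForm hM, conj_sesqForm hM]
  smul_left x y r := by
    rw [← conj_sesqForm hM, sesqForm, map_smul, ← sesqForm, smul_eq_mul, map_mul, conj_sesqForm hM]
  definite x h := by
    by_contra hx
    simpa [← sesqForm_self, h] using (hP x hx).1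

theorem exists_cf_of_posDefM {M : ℕ → ℕ → ℂ} (hM : HermM M) (hP : PosDefM M) : ∃ A, CF M A := by
  let core := innerCoreOfPosDefM hM hP
  let : NormedAddCommGroup (ℕ →₀ ℂ) := core.toNormedAddCommGroup
  let : InnerProductSpace ℂ (ℕ →₀ ℂ) := .ofCore core.toCore
  have hv : LinearIndependent ℂ fun i : ℕ => Finsupp.single i (1 : ℂ) :=
    Finsupp.linearIndependent_single_one ℂ ℕ
  refine ⟨gramCholesky fun i => Finsupp.single i (1 : ℂ), ?_⟩
  convert cf_gramCholesky hv
  exact (sesqForm_single_single M _ _).symm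

/-- An infinite Hermitian matrix has a (unique) Cholesky factorization M = A A⁺
iff it is positive definite. -/
theorem stmt15 (M : ℕ → ℕ → ℂ) (hM : HermM M) :
    ((∃ A, CF M A) ↔ PosDefM M) ∧
    (∀ A₁ A₂, CF M A₁ → CF M A₂ → A₁ = A₂) :=
  ⟨⟨fun ⟨_, hA⟩ => hA.posDefM, exists_cf_of_posDefM hM⟩, fun _ _ => CF.unique⟩
end

section
/- For an n × n Hermitian complex matrix M, a reversed generalized Cholesky factorization M = A⁺ E A (A lower triangular with positive diagonal, E diagonal with entries ±1) exists if and only if every principal submatrix of M formed by the last k rows and columns (south-east corner submatrices, k = 1,…,n) is nonsingular; and when it exists, the factorization is unique. -/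
/-- Reversed generalized Cholesky factorization M = A⁺ E A for finite matrices:
A lower triangular with positive diagonal, E a sign matrix. -/
def RevGCF (n : ℕ) (M A : Matrix (Fin n) (Fin n) ℂ) (E : Fin n → ℝ) : Prop :=
  (∀ i j : Fin n, i < j → A i j = 0) ∧
  (∀ i : Fin n, 0 < (A i i).re ∧ (A i i).im = 0) ∧
  (∀ i : Fin n, E i = 1 ∨ E i = -1) ∧
  M = A.conjTranspose * Matrix.diagonal (fun i => (E i : ℂ)) * A

/-- The south-east corner submatrix of order k of an n × n matrix. -/
def seCorner (n : ℕ) (M : Matrix (Fin n) (Fin n) ℂ) (k : ℕ) (hk : k ≤ n) :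
    Matrix (Fin k) (Fin k) ℂ :=
  M.submatrix (fun i : Fin k => (⟨n - k + i.val, by have := i.isLt; omega⟩ : Fin n))
    (fun j : Fin k => (⟨n - k + j.val, by have := j.isLt; omega⟩ : Fin n))

open Matrix in
lemma entry3 {m : ℕ} (X : Matrix (Fin m) (Fin m) ℂ) (d : Fin m → ℂ) (i j : Fin m) :
    (Xᴴ * Matrix.diagonal d * X) i j = ∑ k, star (X k i) * d k * X k j := by
  rw [Matrix.mul_apply]; congr 1; ext k
  rw [Matrix.mul_diagonal, Matrix.conjTranspose_apply]

lemma detlt {m : ℕ} (X : Matrix (Fin m) (Fin m) ℂ) (h : ∀ i j : Fin m, i < j → X i j = 0) :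
    X.det = ∏ i, X i i :=
  Matrix.det_of_lowerTriangular X (fun i j hij => h i j hij)

open Matrix in
lemma fwd (n : ℕ) (M A : Matrix (Fin n) (Fin n) ℂ) (E : Fin n → ℝ)
    (h : RevGCF n M A E) (k : ℕ) (hk1 : 1 ≤ k) (hk : k ≤ n) :
    (seCorner n M k hk).det ≠ 0 := by
  obtain ⟨htri, hdiag, hE, hfac⟩ := h
  set f : Fin k → Fin n := fun i => (⟨n - k + i.val, by have := i.isLt; omega⟩ : Fin n) with hf
  have hfinj : Function.Injective f := by
    intro a b hab
    have : n - k + a.val = n - k + b.val := congrArg Fin.val hab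
    exact Fin.ext (by omega)
  have hcorner : seCorner n M k hk =
      (seCorner n A k hk)ᴴ * Matrix.diagonal (fun i => (E (f i) : ℂ)) * (seCorner n A k hk) := by
    ext i j
    rw [entry3]
    have : (seCorner n M k hk) i j = M (f i) (f j) := rfl
    rw [this, hfac, entry3]
    rw [show (Finset.univ : Finset (Fin n)) = Finset.univ.image f ∪ (Finset.univ.image f)ᶜ by
      simp]
    rw [Finset.sum_union (disjoint_compl_right)]
    have h2 : ∑ l ∈ (Finset.univ.image f)ᶜ, star (A l (f i)) * (E l : ℂ) * A l (f j) = 0 := by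
      apply Finset.sum_eq_zero
      intro l hl
      have hlv : l.val < n - k := by
        by_contra hc
        push_neg at hc
        have : l ∈ Finset.univ.image f := by
          refine Finset.mem_image.mpr ⟨⟨l.val - (n-k), by have := l.isLt; omega⟩, Finset.mem_univ _, ?_⟩
          exact Fin.ext (by simp [hf]; omega)
        exact absurd this (Finset.mem_compl.mp hl)
      have : A l (f i) = 0 := htri l (f i) (by simp [hf, Fin.lt_def]; omega)
      simp [this]
    rw [h2, add_zero, Finset.sum_image (fun a _ b _ h => hfinj h)]
    rfl
  rw [hcorner, Matrix.det_mul, Matrix.det_mul, Matrix.det_conjTranspose, Matrix.det_diagonal]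
  have hdetA : (seCorner n A k hk).det ≠ 0 := by
    rw [detlt (seCorner n A k hk) (fun i j hij => htri (f i) (f j)
      (by have hij' : (i:ℕ) < (j:ℕ) := hij; simp only [hf, Fin.mk_lt_mk]; omega))]
    · apply Finset.prod_ne_zero_iff.mpr
      intro i _
      have := (hdiag (f i)).1
      intro h0
      rw [show (seCorner n A k hk) i i = A (f i) (f i) from rfl] at h0
      rw [h0] at this; simp at this
  apply mul_ne_zero (mul_ne_zero _ _) hdetA
  · simpa using hdetA
  · apply Finset.prod_ne_zero_iff.mpr
    intro i _
    rcases hE (f i) with h | h <;> simp [h]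

open Matrix in
/-- tail of a RevGCF factorization -/
lemma tail_fac {n : ℕ} {M A : Matrix (Fin (n+1)) (Fin (n+1)) ℂ} {E : Fin (n+1) → ℝ}
    (h : RevGCF (n+1) M A E) :
    RevGCF n (M.submatrix Fin.succ Fin.succ) (A.submatrix Fin.succ Fin.succ) (E ∘ Fin.succ) := by
  obtain ⟨htri, hdiag, hE, hfac⟩ := h
  refine ⟨fun i j hij => htri _ _ (by simpa using hij), fun i => hdiag _, fun i => hE _, ?_⟩
  ext i j
  rw [entry3, Matrix.submatrix_apply, hfac, entry3, Fin.sum_univ_succ]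
  have : A 0 i.succ = 0 := htri 0 i.succ (Fin.succ_pos i)
  simp [this, Matrix.submatrix_apply, Function.comp]

lemma corner_tail {n : ℕ} (M : Matrix (Fin (n+1)) (Fin (n+1)) ℂ) (k : ℕ) (hk : k ≤ n) :
    seCorner (n+1) M k (by omega) = seCorner n (M.submatrix Fin.succ Fin.succ) k hk := by
  ext i j
  show M _ _ = M _ _
  congr 1 <;> exact Fin.ext (by simp [Fin.succ]; omega)

lemma corner_self {n : ℕ} (M : Matrix (Fin n) (Fin n) ℂ) :
    seCorner n M n (le_refl n) = M := by
  ext i j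
  show M _ _ = M _ _
  congr 1 <;> exact Fin.ext (by simp)

open Matrix in
lemma key {n : ℕ} (M A : Matrix (Fin (n+1)) (Fin (n+1)) ℂ) (d : Fin (n+1) → ℂ)
    (hA0 : ∀ j : Fin n, A 0 j.succ = 0)
    (hd : ∀ k : Fin n, star (d k.succ) = d k.succ)
    (h1 : ∀ i j : Fin n, M i.succ j.succ =
      ∑ k : Fin n, star (A k.succ i.succ) * d k.succ * A k.succ j.succ)
    (h2 : ∀ i : Fin n, M i.succ 0 = ∑ k : Fin n, star (A k.succ i.succ) * d k.succ * A k.succ 0)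
    (h3 : ∀ j : Fin n, M 0 j.succ = star (M j.succ 0))
    (h4 : M 0 0 = star (A 0 0) * d 0 * A 0 0 +
      ∑ k : Fin n, star (A k.succ 0) * d k.succ * A k.succ 0) :
    M = Aᴴ * Matrix.diagonal d * A := by
  ext i j
  rw [entry3, Fin.sum_univ_succ]
  induction i using Fin.cases with
  | zero =>
    induction j using Fin.cases with
    | zero => exact h4
    | succ j =>
      rw [hA0 j, mul_zero, zero_add, h3 j, h2 j]
      rw [star_sum]
      refine Finset.sum_congr rfl fun k _ => ?_
      rw [StarMul.star_mul, StarMul.star_mul, star_star, hd k]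
      ring
  | succ i =>
    induction j using Fin.cases with
    | zero =>
      rw [hA0 i, star_zero, zero_mul, zero_mul, zero_add]
      exact h2 i
    | succ j =>
      rw [hA0 i, star_zero, zero_mul, zero_mul, zero_add]
      exact h1 i j

open Matrix in
lemma det_ne {m : ℕ} (A : Matrix (Fin m) (Fin m) ℂ)
    (htri : ∀ i j : Fin m, i < j → A i j = 0)
    (hdiag : ∀ i : Fin m, 0 < (A i i).re ∧ (A i i).im = 0) : A.det ≠ 0 := by
  rw [detlt A htri]
  apply Finset.prod_ne_zero_iff.mpr
  intro i _ h0
  have := (hdiag i).1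
  rw [h0] at this; simp at this

open Matrix in
lemma fac_col {n : ℕ} {M A : Matrix (Fin (n+1)) (Fin (n+1)) ℂ} {E : Fin (n+1) → ℝ}
    (h : RevGCF (n+1) M A E) :
    (∀ i : Fin n, M i.succ 0 =
      ∑ k : Fin n, star (A k.succ i.succ) * (E k.succ : ℂ) * A k.succ 0) ∧
    (M 0 0 = star (A 0 0) * (E 0 : ℂ) * A 0 0 +
      ∑ k : Fin n, star (A k.succ 0) * (E k.succ : ℂ) * A k.succ 0) := by
  obtain ⟨htri, hdiag, hE, hfac⟩ := h
  constructor
  · intro i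
    rw [hfac, entry3, Fin.sum_univ_succ]
    have h0 : A 0 i.succ = 0 := htri 0 i.succ (Fin.succ_pos i)
    simp [h0]
  · rw [hfac, entry3, Fin.sum_univ_succ]

open Matrix in
lemma main : ∀ n : ℕ, ∀ M : Matrix (Fin n) (Fin n) ℂ, M.IsHermitian →
    ((∀ (k : ℕ), 1 ≤ k → ∀ (hk : k ≤ n), (seCorner n M k hk).det ≠ 0) → ∃ A E, RevGCF n M A E) ∧
    (∀ A₁ E₁ A₂ E₂, RevGCF n M A₁ E₁ → RevGCF n M A₂ E₂ → A₁ = A₂ ∧ E₁ = E₂) := by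
  intro n
  induction n with
  | zero =>
    intro M _
    refine ⟨fun _ => ⟨0, fun _ => 1, fun i => i.elim0, fun i => i.elim0, fun i => i.elim0, ?_⟩,
      fun A₁ E₁ A₂ E₂ _ _ => ⟨?_, ?_⟩⟩
    · ext i j; exact i.elim0
    · ext i j; exact i.elim0
    · funext i; exact i.elim0
  | succ n IH =>
    intro M hM
    have hT : (M.submatrix Fin.succ Fin.succ).IsHermitian := hM.submatrix _
    have hM00 : star (M 0 0) = M 0 0 := by
      have := congrFun (congrFun hM 0) 0
      rwa [Matrix.conjTranspose_apply] at this
    have h3 : ∀ j : Fin n, M 0 j.succ = star (M j.succ 0) := by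
      intro j
      have := congrFun (congrFun hM 0) j.succ
      rw [Matrix.conjTranspose_apply] at this
      exact this.symm
    constructor
    · -- existence
      intro hdet
      have hdetT : ∀ k, 1 ≤ k → ∀ hk : k ≤ n,
          (seCorner n (M.submatrix Fin.succ Fin.succ) k hk).det ≠ 0 := by
        intro k hk1 hk
        rw [← corner_tail M k hk]
        exact hdet k hk1 (by omega)
      obtain ⟨A₁, E₁, htri₁, hdiag₁, hE₁, hfm₁⟩ := (IH (M.submatrix Fin.succ Fin.succ) hT).1 hdetT
      have hprodE : (∏ k, (E₁ k : ℂ)) ≠ 0 := by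
        apply Finset.prod_ne_zero_iff.mpr
        intro k _
        rcases hE₁ k with h | h <;> simp [h]
      set N : Matrix (Fin n) (Fin n) ℂ := A₁ᴴ * Matrix.diagonal (fun k => (E₁ k : ℂ)) with hNdef
      have hNdet : IsUnit N.det := by
        rw [hNdef, Matrix.det_mul, Matrix.det_conjTranspose, Matrix.det_diagonal]
        exact (mul_ne_zero (by simpa using det_ne A₁ htri₁ hdiag₁) hprodE).isUnit
      set c : Fin n → ℂ := N⁻¹ *ᵥ (fun i => M i.succ 0) with hcdef
      have hc : N *ᵥ c = (fun i => M i.succ 0) := by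
        rw [hcdef, Matrix.mulVec_mulVec, Matrix.mul_nonsing_inv _ hNdet, Matrix.one_mulVec]
      have h2 : ∀ i, M i.succ 0 = ∑ k : Fin n, star (A₁ k i) * (E₁ k : ℂ) * c k := by
        intro i
        have h := congrFun hc i
        rw [Matrix.mulVec, dotProduct] at h
        rw [← h]
        refine Finset.sum_congr rfl fun k _ => ?_
        rw [hNdef, Matrix.mul_diagonal, Matrix.conjTranspose_apply]
      have h1 : ∀ i j : Fin n, M i.succ j.succ =
          ∑ k : Fin n, star (A₁ k i) * (E₁ k : ℂ) * A₁ k j := by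
        intro i j
        have : (M.submatrix Fin.succ Fin.succ) i j =
            ∑ k : Fin n, star (A₁ k i) * (E₁ k : ℂ) * A₁ k j := by rw [hfm₁, entry3]
        exact this
      set sC : ℂ := M 0 0 - ∑ k : Fin n, star (c k) * (E₁ k : ℂ) * c k with hsCdef
      have hsreal : star sC = sC := by
        rw [hsCdef, star_sub, star_sum, hM00]
        congr 1
        refine Finset.sum_congr rfl fun k _ => ?_
        rw [StarMul.star_mul, StarMul.star_mul, star_star]
        have : star ((E₁ k : ℂ)) = (E₁ k : ℂ) := by
          simp [Complex.star_def, Complex.conj_ofReal]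
        rw [this]; ring
      have hsRC : ((sC.re : ℝ) : ℂ) = sC := Complex.conj_eq_iff_re.mp hsreal
      -- the auxiliary factorization with a = 1, e = sC, to show sC ≠ 0
      set A' : Matrix (Fin (n+1)) (Fin (n+1)) ℂ :=
        Matrix.of (Fin.cons (Fin.cons 1 0) (fun i => Fin.cons (c i) (A₁ i))) with hA'def
      have hA'00 : A' 0 0 = 1 := by simp [hA'def]
      have hA'0s : ∀ j : Fin n, A' 0 j.succ = 0 := by intro j; simp [hA'def]
      have hA's0 : ∀ i : Fin n, A' i.succ 0 = c i := by intro i; simp [hA'def]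
      have hA'ss : ∀ i j : Fin n, A' i.succ j.succ = A₁ i j := by intro i j; simp [hA'def]
      have hkey := key M A' (Fin.cons sC (fun k => (E₁ k : ℂ))) hA'0s
        (by intro k; simp [Complex.star_def, Complex.conj_ofReal])
        (by intro i j; simp only [Fin.cons_succ, hA'ss]; exact h1 i j)
        (by intro i; simp only [Fin.cons_succ, hA'ss, hA's0]; exact h2 i)
        h3
        (by simp only [Fin.cons_zero, Fin.cons_succ, hA'00, hA's0, star_one, mul_one, one_mul]
            rw [hsCdef]; ring)
      have hdM : M.det ≠ 0 := by
        have h := hdet (n+1) (by omega) (le_refl _)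
        rwa [corner_self] at h
      have hsC : sC ≠ 0 := by
        intro h0
        apply hdM
        rw [hkey, Matrix.det_mul, Matrix.det_mul, Matrix.det_diagonal, Fin.prod_univ_succ]
        simp [h0]
      -- final data
      set e₀ : ℝ := if 0 < sC.re then 1 else -1 with he₀def
      set a : ℝ := Real.sqrt |sC.re| with hadef
      have hsR0 : sC.re ≠ 0 := by
        intro h0
        apply hsC
        rw [← hsRC, h0, Complex.ofReal_zero]
      have ha : 0 < a := Real.sqrt_pos.mpr (abs_pos.mpr hsR0)
      have hea : e₀ * (a * a) = sC.re := by
        rw [hadef, Real.mul_self_sqrt (abs_nonneg _), he₀def]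
        rcases lt_trichotomy 0 sC.re with h | h | h
        · rw [if_pos h, one_mul, abs_of_pos h]
        · exact absurd h.symm hsR0
        · rw [if_neg (by linarith), abs_of_neg h]; ring
      refine ⟨Matrix.of (Fin.cons (Fin.cons (a : ℂ) 0) (fun i => Fin.cons (c i) (A₁ i))),
        Fin.cons e₀ E₁, ?_, ?_, ?_, ?_⟩
      · intro i j hij
        induction i using Fin.cases with
        | zero =>
          induction j using Fin.cases with
          | zero => exact absurd hij (lt_irrefl _)
          | succ j => simp
        | succ i =>
          induction j using Fin.cases with
          | zero => exact absurd hij (by simp [Fin.lt_def])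
          | succ j =>
            simp only [Matrix.of_apply, Fin.cons_succ]
            exact htri₁ i j (by simpa using hij)
      · intro i
        induction i using Fin.cases with
        | zero => simp [ha]
        | succ i => simpa using hdiag₁ i
      · intro i
        induction i using Fin.cases with
        | zero => simp only [Fin.cons_zero, he₀def]; split <;> simp
        | succ i => simpa using hE₁ i
      · apply key
        · intro j; simp
        · intro k; simp [Fin.cons_succ, Complex.star_def, Complex.conj_ofReal]
        · intro i j; simp only [Matrix.of_apply, Fin.cons_succ]; exact h1 i j
        · intro i; simp only [Matrix.of_apply, Fin.cons_succ, Fin.cons_zero]; exact h2 i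
        · exact h3
        · simp only [Matrix.of_apply, Fin.cons_zero, Fin.cons_succ]
          have h6 : star ((a:ℝ):ℂ) * ((e₀:ℝ):ℂ) * ((a:ℝ):ℂ) = ((sC.re : ℝ) : ℂ) := by
            rw [Complex.star_def, Complex.conj_ofReal]
            push_cast [← hea]
            ring
          rw [h6, hsRC, hsCdef]
          ring
    · -- uniqueness
      intro A₁ E₁ A₂ E₂ h₁ h₂
      obtain ⟨hAeq, hEeq⟩ := (IH (M.submatrix Fin.succ Fin.succ) hT).2 _ _ _ _
        (tail_fac h₁) (tail_fac h₂)
      have hEs : ∀ k : Fin n, E₂ k.succ = E₁ k.succ := fun k => (congrFun hEeq k).symm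
      have hAs : ∀ i j : Fin n, A₂ i.succ j.succ = A₁ i.succ j.succ :=
        fun i j => (congrFun (congrFun hAeq i) j).symm
      obtain ⟨htri₁, hdiag₁, hE₁v, _⟩ := h₁
      obtain ⟨htri₂, hdiag₂, hE₂v, _⟩ := h₂
      set T' : Matrix (Fin n) (Fin n) ℂ := A₁.submatrix Fin.succ Fin.succ with hT'def
      set N : Matrix (Fin n) (Fin n) ℂ := T'ᴴ * Matrix.diagonal (fun k => (E₁ k.succ : ℂ))
        with hNdef
      have hNdet : IsUnit N.det := by
        rw [hNdef, Matrix.det_mul, Matrix.det_conjTranspose, Matrix.det_diagonal]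
        refine (mul_ne_zero ?_ ?_).isUnit
        · simpa using det_ne T' (fun i j hij => htri₁ i.succ j.succ (by simpa using hij))
            (fun i => hdiag₁ i.succ)
        · apply Finset.prod_ne_zero_iff.mpr
          intro k _
          rcases hE₁v k.succ with h | h <;> simp [h]
      have hrg₁ : RevGCF (n+1) M A₁ E₁ := ⟨htri₁, hdiag₁, hE₁v, by assumption⟩
      have hrg₂ : RevGCF (n+1) M A₂ E₂ := ⟨htri₂, hdiag₂, hE₂v, by assumption⟩
      set c₁ : Fin n → ℂ := fun k => A₁ k.succ 0 with hc₁def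
      set c₂ : Fin n → ℂ := fun k => A₂ k.succ 0 with hc₂def
      have hNc : N *ᵥ c₁ = N *ᵥ c₂ := by
        funext i
        have e₁ : (N *ᵥ c₁) i = M i.succ 0 := by
          rw [Matrix.mulVec, dotProduct, (fac_col hrg₁).1 i]
          refine Finset.sum_congr rfl fun k _ => ?_
          rw [hNdef, Matrix.mul_diagonal, Matrix.conjTranspose_apply, hT'def,
            Matrix.submatrix_apply, hc₁def]
        have e₂ : (N *ᵥ c₂) i = M i.succ 0 := by
          rw [Matrix.mulVec, dotProduct, (fac_col hrg₂).1 i]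
          refine Finset.sum_congr rfl fun k _ => ?_
          rw [hNdef, Matrix.mul_diagonal, Matrix.conjTranspose_apply, hT'def,
            Matrix.submatrix_apply, hc₂def, hEs k, hAs k i]
        rw [e₁, e₂]
      have hcc : c₁ = c₂ := by
        have h5 : N⁻¹ *ᵥ (N *ᵥ c₁) = N⁻¹ *ᵥ (N *ᵥ c₂) := by rw [hNc]
        rwa [Matrix.mulVec_mulVec, Matrix.mulVec_mulVec, Matrix.nonsing_inv_mul _ hNdet,
          Matrix.one_mulVec, Matrix.one_mulVec] at h5
      -- corner entry
      have hcol₁ := (fac_col hrg₁).2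
      have hcol₂ := (fac_col hrg₂).2
      have hsum_eq : ∑ k : Fin n, star (A₂ k.succ 0) * (E₂ k.succ : ℂ) * A₂ k.succ 0 =
          ∑ k : Fin n, star (A₁ k.succ 0) * (E₁ k.succ : ℂ) * A₁ k.succ 0 := by
        refine Finset.sum_congr rfl fun k _ => ?_
        have hck : A₂ k.succ 0 = A₁ k.succ 0 := (congrFun hcc k).symm
        rw [hck, hEs k]
      have hcorner : star (A₁ 0 0) * (E₁ 0 : ℂ) * A₁ 0 0 =
          star (A₂ 0 0) * (E₂ 0 : ℂ) * A₂ 0 0 := by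
        have := hcol₁.symm.trans hcol₂
        rw [hsum_eq] at this
        exact add_right_cancel this
      set x₁ : ℝ := (A₁ 0 0).re with hx₁
      set x₂ : ℝ := (A₂ 0 0).re with hx₂
      have hx₁p : 0 < x₁ := (hdiag₁ 0).1
      have hx₂p : 0 < x₂ := (hdiag₂ 0).1
      have hA₁00 : A₁ 0 0 = (x₁ : ℂ) := Complex.ext (by simp [hx₁]) (by simp [(hdiag₁ 0).2])
      have hA₂00 : A₂ 0 0 = (x₂ : ℂ) := Complex.ext (by simp [hx₂]) (by simp [(hdiag₂ 0).2])
      have hreal : E₁ 0 * (x₁ * x₁) = E₂ 0 * (x₂ * x₂) := by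
        have h8 := hcorner
        rw [hA₁00, hA₂00] at h8
        simp only [Complex.star_def, Complex.conj_ofReal] at h8
        have h7 : ((E₁ 0 * (x₁ * x₁) : ℝ) : ℂ) = ((E₂ 0 * (x₂ * x₂) : ℝ) : ℂ) := by
          push_cast
          linear_combination h8
        exact_mod_cast h7
      have hE0 : E₁ 0 = E₂ 0 := by
        rcases hE₁v 0 with h1 | h1 <;> rcases hE₂v 0 with h2 | h2 <;>
          rw [h1, h2] at hreal ⊢ <;> first | rfl | nlinarith
      have hx12 : x₁ = x₂ := by
        rw [← hE0] at hreal
        rcases hE₁v 0 with h1 | h1 <;> rw [h1] at hreal <;> nlinarith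
      have h00 : A₁ 0 0 = A₂ 0 0 := by rw [hA₁00, hA₂00, hx12]
      constructor
      · ext i j
        induction i using Fin.cases with
        | zero =>
          induction j using Fin.cases with
          | zero => exact h00
          | succ j => rw [htri₁ _ _ (Fin.succ_pos j), htri₂ _ _ (Fin.succ_pos j)]
        | succ i =>
          induction j using Fin.cases with
          | zero => exact congrFun hcc i
          | succ j => exact congrFun (congrFun hAeq i) j
      · funext i
        induction i using Fin.cases with
        | zero => exact hE0
        | succ i => exact congrFun hEeq i

/-- A finite Hermitian matrix has a reversed generalized Cholesky factorization
M = A⁺ E A iff all its south-east corner submatrices are nonsingular, and the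
factorization is unique when it exists. -/
theorem stmt17 (n : ℕ) (M : Matrix (Fin n) (Fin n) ℂ) (hM : M.IsHermitian) :
    ((∃ A E, RevGCF n M A E) ↔
      (∀ (k : ℕ) (hk1 : 1 ≤ k) (hk : k ≤ n), (seCorner n M k hk).det ≠ 0)) ∧
    (∀ A₁ E₁ A₂ E₂, RevGCF n M A₁ E₁ → RevGCF n M A₂ E₂ → A₁ = A₂ ∧ E₁ = E₂) := by
  refine ⟨⟨?_, fun hdet => (main n M hM).1 hdet⟩, (main n M hM).2⟩
  rintro ⟨A, E, h⟩ k hk1 hk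
  exact fwd n M A E h k hk1 hk
end

section
/- Let (B_n) be a sequence of bounded operators on the Hilbert space ℓ² of square-summable sequences whose matrices (in the canonical basis) are uniformly banded (there is N with (B_n)_{i,j} = 0 whenever |i − j| > N for all n) and with sup_n ‖B_n‖ < ∞. If B_n converges weakly to a bounded operator B, then B_n converges strongly to B. -/
noncomputable section

/-- The Hilbert space ℓ² of square-summable complex sequences. -/
abbrev H2 : Type := lp (fun _ : ℕ => ℂ) 2

/-- The canonical orthonormal basis vectors of ℓ². -/
def e2 (k : ℕ) : H2 := lp.single 2 k (1 : ℂ)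

/-!
Banding confines every column `B n (e2 j)` to the coordinates `i ≤ j + N`, a fixed
finite-dimensional space in which coordinatewise convergence, implied by weak convergence, is
norm convergence; so `B n → Blim` strongly on the basis. A uniformly bounded family of operators
is equicontinuous, so the vectors on which it converges strongly to `Blim` form a closed
subspace; containing the basis, it is all of ℓ².
-/

open Filter Topology ComplexConjugate Submodule

namespace ContinuousLinearMap

variable {𝕜 E F ι : Type*} [NontriviallyNormedField 𝕜] [SeminormedAddCommGroup E]
  [NormedSpace 𝕜 E] [SeminormedAddCommGroup F] [NormedSpace 𝕜 F]

def convergenceSubmodule (l : Filter ι) (T : ι → E →L[𝕜] F) (S : E →L[𝕜] F) :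
    Submodule 𝕜 E where
  carrier := {x | Tendsto (fun i => T i x) l (𝓝 (S x))}
  add_mem' hx hy := by simpa only [Set.mem_ofPred_eq, map_add] using hx.add hy
  zero_mem' := by simpa only [Set.mem_ofPred_eq, map_zero] using tendsto_const_nhds
  smul_mem' c _ hx := by simpa only [Set.mem_ofPred_eq, map_smul] using hx.const_smul c

theorem isClosed_convergenceSubmodule {l : Filter ι} {T : ι → E →L[𝕜] F} (S : E →L[𝕜] F)
    {C : ℝ} (hT : ∀ i, ‖T i‖ ≤ C) : IsClosed (convergenceSubmodule l T S : Set E) := by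
  have hequi : Equicontinuous ((↑) ∘ T : ι → E → F) :=
    (show (∃ C, ∀ i, ‖T i‖ ≤ C) ↔ _ from (NormedSpace.equicontinuous_TFAE T).out 5 1).mp ⟨C, hT⟩
  exact hequi.isClosed_setOfPred_tendsto S.continuous

theorem tendsto_apply_of_dense_span {l : Filter ι} {T : ι → E →L[𝕜] F} {S : E →L[𝕜] F} {C : ℝ}
    (hT : ∀ i, ‖T i‖ ≤ C) {v : Set E} (hv : (span 𝕜 v).topologicalClosure = ⊤)
    (h : ∀ x ∈ v, Tendsto (fun i => T i x) l (𝓝 (S x))) (x : E) :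
    Tendsto (fun i => T i x) l (𝓝 (S x)) := by
  have hle : (span 𝕜 v).topologicalClosure ≤ convergenceSubmodule l T S :=
    topologicalClosure_minimal _ (span_le.2 h) (isClosed_convergenceSubmodule S hT)
  exact (hv ▸ hle) mem_top

end ContinuousLinearMap

namespace lp

variable {α : Type*} [DecidableEq α] {E : α → Type*} [∀ i, NormedAddCommGroup (E i)]
  {p : ENNReal}

theorem eq_sum_single_of_support_subset {f : lp E p} {s : Finset α} (hf : ∀ i ∉ s, f i = 0) :
    f = ∑ i ∈ s, lp.single p i (f i) := by
  ext j
  simp only [coeFn_sum, Finset.sum_apply, lp.coeFn_single, Finset.sum_pi_single]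
  split_ifs with hj
  · rfl
  · exact hf j hj

theorem tendsto_of_tendsto_apply_of_support_subset [Fact (1 ≤ p)] {ι : Type*} {l : Filter ι}
    [l.NeBot] {f : ι → lp E p} {g : lp E p} (s : Finset α) (hf : ∀ n, ∀ i ∉ s, f n i = 0)
    (h : ∀ i, Tendsto (fun n => f n i) l (𝓝 (g i))) : Tendsto f l (𝓝 g) := by
  have hg : ∀ i ∉ s, g i = 0 := fun i hi =>
    tendsto_nhds_unique (h i) (by simpa only [hf _ i hi] using tendsto_const_nhds)
  rw [eq_sum_single_of_support_subset hg, funext fun n => eq_sum_single_of_support_subset (hf n)]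
  exact tendsto_finsetSum s fun i _ => ((isometry_single i).continuous.tendsto _).comp (h i)

end lp

theorem inner_e2_right (f : H2) (i : ℕ) : inner (𝕜 := ℂ) f (e2 i) = conj (f i) := by
  simpa [e2] using lp.inner_single_right (𝕜 := ℂ) i (1 : ℂ) f

theorem tendsto_apply_of_tendsto_inner_e2 {ι : Type*} {l : Filter ι} {f : ι → H2} {g : H2}
    (h : ∀ i, Tendsto (fun n => inner (𝕜 := ℂ) (f n) (e2 i)) l (𝓝 (inner (𝕜 := ℂ) g (e2 i))))
    (i : ℕ) : Tendsto (fun n => f n i) l (𝓝 (g i)) := by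
  simpa [inner_e2_right, Function.comp_def] using (Complex.continuous_conj.tendsto _).comp (h i)

theorem topologicalClosure_span_range_e2 : (span ℂ (Set.range e2)).topologicalClosure = ⊤ := by
  let b : HilbertBasis ℕ ℂ H2 := .ofRepr (LinearIsometryEquiv.refl ℂ H2)
  have hb : ⇑b = e2 := funext fun i => (b.repr_symm_single i).symm
  exact hb ▸ b.dense_span

/-- A uniformly banded, uniformly bounded, weakly convergent sequence of bounded
operators on ℓ² is strongly convergent. -/
theorem stmt18 (B : ℕ → H2 →L[ℂ] H2) (Blim : H2 →L[ℂ] H2) (N : ℕ) (Cb : ℝ)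
    (hband : ∀ (n i j : ℕ), i + N < j ∨ j + N < i →
      inner (𝕜 := ℂ) (B n (e2 j)) (e2 i) = (0 : ℂ))
    (hbd : ∀ n : ℕ, ‖B n‖ ≤ Cb)
    (hweak : ∀ x y : H2, Filter.Tendsto (fun n => inner (𝕜 := ℂ) (B n x) y)
      Filter.atTop (nhds (inner (𝕜 := ℂ) (Blim x) y))) :
    ∀ x : H2, Filter.Tendsto (fun n => B n x) Filter.atTop (nhds (Blim x)) := by
  have hcolumn : ∀ n j i, i ∉ Finset.Iic (j + N) → B n (e2 j) i = 0 := fun n j i hi => by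
    simpa [inner_e2_right] using hband n i j (Or.inr (by simpa using hi))
  have hbasis : ∀ j, Tendsto (fun n => B n (e2 j)) atTop (𝓝 (Blim (e2 j))) := fun j =>
    lp.tendsto_of_tendsto_apply_of_support_subset _ (fun n => hcolumn n j)
      (tendsto_apply_of_tendsto_inner_e2 fun i => hweak _ _)
  exact ContinuousLinearMap.tendsto_apply_of_dense_span hbd topologicalClosure_span_range_e2
    (Set.forall_mem_range.2 hbasis)
end
end
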